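/- arXiv:2001.11404 — 7 statements merged into one kernel-verified Lean document; each statement's English description precedes it below -/
import Mathlib

section
/- Let J ⊆ ℝ be an open interval, A : J → ℝ a C¹ function, C₁ ≠ 0, C₂ and α₀ real constants such that C₁ξ + C₂ ≠ 0 and A(ξ)/(C₁(C₁ξ+C₂)) > 0 for all ξ ∈ J. Let G : J → ℝ satisfy G'(ξ) = A(ξ)/(C₁(C₁ξ+C₂)) (so G is strictly increasing with inverse G⁻¹ : G(J) → J), and let Q satisfy Q' = A on J. Then the function ρ(t,x) := G⁻¹((x+α₀)/C₁ + t), defined for all (t,x) with (x+α₀)/C₁ + t ∈ G(J), satisfies the non-stationary filtration equation ∂ₜρ = ∂ₓ∂ₓ(Q∘ρ). -/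
/-!
`G` has positive derivative on the open set `J` and a left inverse `Ginv` there, so by the
intermediate value theorem near each point it is a local homeomorphism onto the open set `G '' J`,
and `Ginv` is differentiable on it with `Ginv' = C₁ (C₁ Ginv + C₂) / A(Ginv)`. Hence
`ρ(t,x) = Ginv(z)`, `z = (x + α₀)/C₁ + t`, has `ρₜ = Ginv'(z)` and
`(Q ∘ ρ)ₓ = A(Ginv z) Ginv'(z) / C₁ = C₁ ρ + C₂`, whose `x`-derivative is again `Ginv'(z)`.
-/

open Set Filter Topology

namespace HasDerivAt

variable {f : ℝ → ℝ} {f' a : ℝ}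

theorem eventually_nhdsGT_lt (hf : HasDerivAt f f' a) (hf' : 0 < f') :
    ∀ᶠ x in 𝓝[>] a, f a < f x := by
  filter_upwards [(hf.tendsto_slope.mono_left (nhdsGT_le_nhdsNE a)).eventually
    (eventually_gt_nhds hf'), self_mem_nhdsWithin] with x hslope hx
  exact (slope_pos_iff hx).1 hslope

theorem eventually_nhdsLT_gt (hf : HasDerivAt f f' a) (hf' : 0 < f') :
    ∀ᶠ x in 𝓝[<] a, f x < f a := by
  filter_upwards [(hf.tendsto_slope.mono_left (nhdsLT_le_nhdsNE a)).eventually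
    (eventually_gt_nhds hf'), self_mem_nhdsWithin] with x hslope hx
  exact (slope_pos_iff_gt hx).1 hslope

theorem image_mem_nhds_of_pos {U : Set ℝ} (hf : HasDerivAt f f' a) (hf' : 0 < f')
    (hU : U ∈ 𝓝 a) (hcont : ContinuousOn f U) : f '' U ∈ 𝓝 (f a) := by
  obtain ⟨ε, hε, hball⟩ := Metric.mem_nhds_iff.1 hU
  obtain ⟨b, hfb, hb⟩ :=
    ((hf.eventually_nhdsGT_lt hf').and (Ioo_mem_nhdsGT (lt_add_of_pos_right a hε))).exists
  obtain ⟨c, hfc, hc⟩ :=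
    ((hf.eventually_nhdsLT_gt hf').and (Ioo_mem_nhdsLT (sub_lt_self a hε))).exists
  have hIcc : Icc c b ⊆ U := fun y hy =>
    hball (by rw [Real.ball_eq_Ioo]; exact ⟨hc.1.trans_le hy.1, hy.2.trans_lt hb.2⟩)
  filter_upwards [Ioo_mem_nhds hfc hfb] with y hy
  exact image_mono hIcc <| intermediate_value_Icc (hc.2.trans hb.1).le (hcont.mono hIcc)
    (Ioo_subset_Icc_self hy)

end HasDerivAt

section LocalInverse

variable {f g f' : ℝ → ℝ} {s : Set ℝ}

theorem isOpen_image_of_hasDerivAt_pos (hs : IsOpen s) (hf : ∀ x ∈ s, HasDerivAt f (f' x) x)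
    (hf' : ∀ x ∈ s, 0 < f' x) : IsOpen (f '' s) := by
  have hcont : ContinuousOn f s := fun x hx => (hf x hx).continuousAt.continuousWithinAt
  rw [isOpen_iff_mem_nhds]
  rintro _ ⟨a, ha, rfl⟩
  exact (hf a ha).image_mem_nhds_of_pos (hf' a ha) (hs.mem_nhds ha) hcont

theorem Set.LeftInvOn.continuousAt_of_hasDerivAt_pos (hgf : LeftInvOn g f s) (hs : IsOpen s)
    (hf : ∀ x ∈ s, HasDerivAt f (f' x) x) (hf' : ∀ x ∈ s, 0 < f' x) {a : ℝ} (ha : a ∈ s) :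
    ContinuousAt g (f a) := by
  have hcont : ContinuousOn f s := fun x hx => (hf x hx).continuousAt.continuousWithinAt
  rw [ContinuousAt, hgf ha]
  refine fun U hU => mem_map.2 <| mem_of_superset ((hf a ha).image_mem_nhds_of_pos (hf' a ha)
    (inter_mem hU (hs.mem_nhds ha)) (hcont.mono inter_subset_right)) ?_
  rintro _ ⟨x, ⟨hxU, hxs⟩, rfl⟩
  rwa [mem_preimage, hgf hxs]

theorem Set.LeftInvOn.hasDerivAt_of_hasDerivAt_pos (hgf : LeftInvOn g f s) (hs : IsOpen s)
    (hf : ∀ x ∈ s, HasDerivAt f (f' x) x) (hf' : ∀ x ∈ s, 0 < f' x) {a : ℝ} (ha : a ∈ s) :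
    HasDerivAt g (f' a)⁻¹ (f a) := by
  have hfg : ∀ᶠ y in 𝓝 (f a), f (g y) = y := by
    filter_upwards [(isOpen_image_of_hasDerivAt_pos hs hf hf').mem_nhds (mem_image_of_mem f ha)]
    rintro _ ⟨x, hx, rfl⟩
    rw [hgf hx]
  refine HasDerivAt.of_local_left_inverse (hgf.continuousAt_of_hasDerivAt_pos hs hf hf' ha) ?_
    (hf' a ha).ne' hfg
  rw [hgf ha]
  exact hf a ha

end LocalInverse

section TravellingWave

variable {V : Set ℝ} {h A Q : ℝ → ℝ} {C₁ C₂ α₀ : ℝ}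

theorem hasDerivAt_travellingCoord_x (t x : ℝ) :
    HasDerivAt (fun x' => (x' + α₀) / C₁ + t) (1 / C₁) x :=
  (((hasDerivAt_id' x).add_const α₀).div_const C₁).add_const t

theorem hasDerivAt_travellingCoord_t (t x : ℝ) :
    HasDerivAt (fun t' => (x + α₀) / C₁ + t') 1 t :=
  (hasDerivAt_id' t).const_add _

theorem deriv_comp_travellingWave_x (hC₁ : C₁ ≠ 0)
    (hh : ∀ z ∈ V, HasDerivAt h (C₁ * (C₁ * h z + C₂) / A (h z)) z)
    (hA : ∀ z ∈ V, A (h z) ≠ 0) (hQ : ∀ z ∈ V, HasDerivAt Q (A (h z)) (h z))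
    {t x : ℝ} (hz : (x + α₀) / C₁ + t ∈ V) :
    deriv (fun x' => Q (h ((x' + α₀) / C₁ + t))) x = C₁ * h ((x + α₀) / C₁ + t) + C₂ := by
  have hd : HasDerivAt (fun x' => Q (h ((x' + α₀) / C₁ + t))) _ x :=
    (hQ _ hz).comp x ((hh _ hz).comp x (hasDerivAt_travellingCoord_x t x))
  rw [hd.deriv]
  generalize (x + α₀) / C₁ + t = z at hz ⊢
  field_simp [hA z hz]

theorem filtration_eq_of_travellingWave (hV : IsOpen V) (hC₁ : C₁ ≠ 0)
    (hh : ∀ z ∈ V, HasDerivAt h (C₁ * (C₁ * h z + C₂) / A (h z)) z)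
    (hA : ∀ z ∈ V, A (h z) ≠ 0) (hQ : ∀ z ∈ V, HasDerivAt Q (A (h z)) (h z))
    {t x : ℝ} (hz : (x + α₀) / C₁ + t ∈ V) :
    deriv (fun t' => h ((x + α₀) / C₁ + t')) t
      = deriv (fun x' => deriv (fun x'' => Q (h ((x'' + α₀) / C₁ + t))) x') x := by
  have hflux : (fun x' => deriv (fun x'' => Q (h ((x'' + α₀) / C₁ + t))) x')
      =ᶠ[𝓝 x] fun x' => C₁ * h ((x' + α₀) / C₁ + t) + C₂ := by
    have hVx : {x' | (x' + α₀) / C₁ + t ∈ V} ∈ 𝓝 x :=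
      (hV.preimage (by fun_prop)).mem_nhds hz
    filter_upwards [hVx] with x' hx'
    exact deriv_comp_travellingWave_x hC₁ hh hA hQ hx'
  have hρt : HasDerivAt (fun t' => h ((x + α₀) / C₁ + t')) _ t :=
    (hh _ hz).comp t (hasDerivAt_travellingCoord_t t x)
  have hfluxx : HasDerivAt (fun x' => C₁ * h ((x' + α₀) / C₁ + t) + C₂) _ x :=
    (((hh _ hz).comp x (hasDerivAt_travellingCoord_x t x)).const_mul C₁).add_const C₂
  rw [hflux.deriv_eq, hρt.deriv, hfluxx.deriv]
  field_simp

end TravellingWave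

theorem filtration_solution_from_first_order_dynamics_general
    (J : Set ℝ) (hJopen : IsOpen J)
    (A Q G Ginv : ℝ → ℝ) (C₁ C₂ α₀ : ℝ) (hC₁ : C₁ ≠ 0)
    (hGpos : ∀ ξ ∈ J, 0 < A ξ / (C₁ * (C₁ * ξ + C₂)))
    (hG : ∀ ξ ∈ J, HasDerivAt G (A ξ / (C₁ * (C₁ * ξ + C₂))) ξ)
    (hQ : ∀ ξ ∈ J, HasDerivAt Q (A ξ) ξ)
    (hGinv_left : ∀ ξ ∈ J, Ginv (G ξ) = ξ)
    (ρ : ℝ → ℝ → ℝ)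
    (hρ : ∀ t x : ℝ, ρ t x = Ginv ((x + α₀) / C₁ + t)) :
    ∀ t x : ℝ, (x + α₀) / C₁ + t ∈ G '' J →
      deriv (fun t' => ρ t' x) t
        = deriv (fun x' => deriv (fun x'' => Q (ρ t x'')) x') x := by
  intro t x hz
  simp only [hρ]
  have hGinv : LeftInvOn Ginv G J := hGinv_left
  refine filtration_eq_of_travellingWave (A := A) (C₂ := C₂) (isOpen_image_of_hasDerivAt_pos hJopen hG hGpos) hC₁
    ?_ ?_ ?_ hz <;> rintro _ ⟨ξ, hξ, rfl⟩ <;> rw [hGinv hξ]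
  · rw [← inv_div]
    exact hGinv.hasDerivAt_of_hasDerivAt_pos hJopen hG hGpos hξ
  · exact (div_ne_zero_iff.1 (hGpos ξ hξ).ne').1
  · exact hQ ξ hξ

/-- The function `ρ(t,x) = G⁻¹((x+α₀)/C₁ + t)`, where `G' = A/(C₁(C₁ξ+C₂)) > 0` on the
open interval `J` and `Q' = A`, satisfies the non-stationary filtration equation
`ρₜ = (Q(ρ))ₓₓ` wherever `(x+α₀)/C₁ + t ∈ G(J)`. -/
theorem filtration_solution_from_first_order_dynamics
    (J : Set ℝ) (hJopen : IsOpen J) (hJconn : J.OrdConnected)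
    (A Q G Ginv : ℝ → ℝ) (C₁ C₂ α₀ : ℝ) (hC₁ : C₁ ≠ 0)
    (hA : ContDiffOn ℝ 1 A J)
    (hne : ∀ ξ ∈ J, C₁ * ξ + C₂ ≠ 0)
    (hGpos : ∀ ξ ∈ J, 0 < A ξ / (C₁ * (C₁ * ξ + C₂)))
    (hG : ∀ ξ ∈ J, HasDerivAt G (A ξ / (C₁ * (C₁ * ξ + C₂))) ξ)
    (hQ : ∀ ξ ∈ J, HasDerivAt Q (A ξ) ξ)
    (hGinv_left : ∀ ξ ∈ J, Ginv (G ξ) = ξ)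
    (hGinv_right : ∀ z ∈ G '' J, G (Ginv z) = z)
    (hGinv_mem : ∀ z ∈ G '' J, Ginv z ∈ J)
    (ρ : ℝ → ℝ → ℝ)
    (hρ : ∀ t x : ℝ, ρ t x = Ginv ((x + α₀) / C₁ + t)) :
    ∀ t x : ℝ, (x + α₀) / C₁ + t ∈ G '' J →
      deriv (fun t' => ρ t' x) t
        = deriv (fun x' => deriv (fun x'' => Q (ρ t x'')) x') x :=
  filtration_solution_from_first_order_dynamics_general J hJopen A Q G Ginv C₁ C₂ α₀ hC₁ hGpos hG hQ
    hGinv_left ρ hρ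
end

section
/- Let n > 2, set ν := 1 + 2/n, and let σ₀ ∈ ℝ satisfy exp(3σ₀/(4n)) > (1/(4ν))·(1+ν)^{1+ν}·(2−ν)^{2−ν}. Then with E := exp(3σ₀/(4n)), for every ρ ∈ (0,3): −6ρ² + 24E·ν·ρ^{ν}·(3−ρ)^{−1−ν} > 0. Consequently Q'(ρ) = (k/μ)(−6ρ² + 24E·ν·ρ^{ν}(3−ρ)^{−1−ν}) is strictly positive on (0,3) for any k, μ > 0, so any antiderivative G of Q'(ρ)/(C₁(C₁ρ+C₂)) with C₁(C₁ρ+C₂) > 0 on (0,3) is strictly monotone, hence invertible. -/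
/-!
Write `ρ² = ρ^ν · ρ^(2-ν)`. Since `ρ + (3 - ρ) = (2 - ν) + (1 + ν)`, weighted AM-GM gives
`ρ^(2-ν) (3-ρ)^(1+ν) ≤ (2-ν)^(2-ν) (1+ν)^(1+ν)`, which the hypothesis on `E` bounds by `4νE`;
hence `6ρ² < 24Eν ρ^ν (3-ρ)^(-1-ν)`, and `G' = Q'/(C₁(C₁ρ+C₂)) > 0` makes `G` strictly increasing.
-/

open Real Set

theorem rpow_mul_rpow_le_of_add_eq_add {a b x y : ℝ} (ha : 0 < a) (hb : 0 < b) (hx : 0 ≤ x)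
    (hy : 0 ≤ y) (hxy : x + y = a + b) : x ^ a * y ^ b ≤ a ^ a * b ^ b := by
  have hs : 0 < a + b := add_pos ha hb
  have hw : a / (a + b) + b / (a + b) = 1 := by field_simp
  have amgm := geom_mean_le_arith_mean2_weighted (div_pos ha hs).le (div_pos hb hs).le
    (div_nonneg hx ha.le) (div_nonneg hy hb.le) hw
  have hmean : a / (a + b) * (x / a) + b / (a + b) * (y / b) = 1 := by
    field_simp; linarith
  rw [hmean] at amgm
  have := rpow_le_one (by positivity) amgm hs.le
  rwa [mul_rpow (by positivity) (by positivity), ← rpow_mul (div_nonneg hx ha.le),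
    ← rpow_mul (div_nonneg hy hb.le), div_mul_cancel₀ _ hs.ne', div_mul_cancel₀ _ hs.ne',
    div_rpow hx ha.le, div_rpow hy hb.le, div_mul_div_comm, div_le_one (by positivity)] at this

theorem vdw_filtrationCoeff_pos {ν E ρ : ℝ} (hν₁ : -1 < ν) (hν₂ : ν < 2)
    (hE : (1 + ν) ^ (1 + ν) * (2 - ν) ^ (2 - ν) < 4 * ν * E) (hρ : ρ ∈ Ioo 0 3) :
    0 < -6 * ρ ^ 2 + 24 * E * ν * ρ ^ ν * (3 - ρ) ^ (-1 - ν) := by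
  obtain ⟨hρ₀, hρ₃⟩ := hρ
  have h3ρ : 0 < 3 - ρ := by linarith
  have hsplit : ρ ^ 2 = ρ ^ ν * ρ ^ (2 - ν) := by
    rw [← rpow_add hρ₀, add_sub_cancel, rpow_two]
  have hinv : (3 - ρ) ^ (-1 - ν) = ((3 - ρ) ^ (1 + ν))⁻¹ := by
    rw [← rpow_neg h3ρ.le, neg_add']
  have hamgm : ρ ^ (2 - ν) * (3 - ρ) ^ (1 + ν) < 4 * ν * E :=
    calc ρ ^ (2 - ν) * (3 - ρ) ^ (1 + ν)
        ≤ (2 - ν) ^ (2 - ν) * (1 + ν) ^ (1 + ν) :=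
          rpow_mul_rpow_le_of_add_eq_add (by linarith) (by linarith) hρ₀.le h3ρ.le (by ring)
      _ < 4 * ν * E := by rwa [mul_comm]
  have hden : 0 < (3 - ρ) ^ (1 + ν) := rpow_pos_of_pos h3ρ _
  suffices 6 * ρ ^ 2 < 24 * E * ν * ρ ^ ν / (3 - ρ) ^ (1 + ν) by
    rw [hinv, ← div_eq_mul_inv]; linarith
  rw [lt_div_iff₀ hden]
  calc 6 * ρ ^ 2 * (3 - ρ) ^ (1 + ν) = 6 * ρ ^ ν * (ρ ^ (2 - ν) * (3 - ρ) ^ (1 + ν)) := by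
        rw [hsplit]; ring
    _ < 6 * ρ ^ ν * (4 * ν * E) := by gcongr
    _ = 24 * E * ν * ρ ^ ν := by ring

theorem strictMonoOn_of_hasDerivAt_pos {D : Set ℝ} (hD : Convex ℝ D) (hDo : IsOpen D)
    {f f' : ℝ → ℝ} (hf : ∀ x ∈ D, HasDerivAt f (f' x) x) (hf' : ∀ x ∈ D, 0 < f' x) :
    StrictMonoOn f D :=
  strictMonoOn_of_deriv_pos hD (fun x hx => (hf x hx).continuousAt.continuousWithinAt)
    fun x hx => by
      rw [hDo.interior_eq] at hx
      rw [(hf x hx).deriv]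
      exact hf' x hx

theorem vdw_isentropic_invertibility_general
    (n ν E : ℝ) (hn : 2 < n) (hν : ν = 1 + 2 / n)
    (hσ : E > 1 / (4 * ν) * (1 + ν) ^ (1 + ν : ℝ) * (2 - ν) ^ (2 - ν : ℝ)) :
    (∀ ρ ∈ Set.Ioo (0 : ℝ) 3,
        0 < -6 * ρ ^ 2 + 24 * E * ν * ρ ^ (ν : ℝ) * (3 - ρ) ^ (-1 - ν : ℝ)) ∧
    (∀ k μ : ℝ, 0 < k → 0 < μ →
      (∀ ρ ∈ Set.Ioo (0 : ℝ) 3,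
          0 < k / μ * (-6 * ρ ^ 2
                + 24 * E * ν * ρ ^ (ν : ℝ) * (3 - ρ) ^ (-1 - ν : ℝ))) ∧
      (∀ C₁ C₂ : ℝ, (∀ ρ ∈ Set.Ioo (0 : ℝ) 3, 0 < C₁ * (C₁ * ρ + C₂)) →
        ∀ G : ℝ → ℝ,
          (∀ ρ ∈ Set.Ioo (0 : ℝ) 3,
            HasDerivAt G
              (k / μ * (-6 * ρ ^ 2
                  + 24 * E * ν * ρ ^ (ν : ℝ) * (3 - ρ) ^ (-1 - ν : ℝ))
                / (C₁ * (C₁ * ρ + C₂))) ρ) →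
          StrictMonoOn G (Set.Ioo (0 : ℝ) 3))) := by
  have hn₀ : 0 < n := by linarith
  have hν₀ : 0 < ν := by rw [hν]; positivity
  have hν₂ : ν < 2 := by rw [hν]; linarith [(div_lt_one hn₀).2 hn]
  have hE : (1 + ν) ^ (1 + ν) * (2 - ν) ^ (2 - ν) < 4 * ν * E :=
    calc (1 + ν) ^ (1 + ν) * (2 - ν) ^ (2 - ν)
        = 4 * ν * (1 / (4 * ν) * (1 + ν) ^ (1 + ν) * (2 - ν) ^ (2 - ν)) := by field_simp
      _ < 4 * ν * E := by gcongr
  have hQ : ∀ ρ ∈ Ioo (0 : ℝ) 3, 0 < -6 * ρ ^ 2 + 24 * E * ν * ρ ^ ν * (3 - ρ) ^ (-1 - ν) :=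
    fun ρ hρ => vdw_filtrationCoeff_pos (by linarith) hν₂ hE hρ
  refine ⟨hQ, fun k μ hk hμ => ?_⟩
  have hkμQ : ∀ ρ ∈ Ioo (0 : ℝ) 3, 0 < k / μ * (-6 * ρ ^ 2
      + 24 * E * ν * ρ ^ ν * (3 - ρ) ^ (-1 - ν)) :=
    fun ρ hρ => mul_pos (div_pos hk hμ) (hQ ρ hρ)
  refine ⟨hkμQ, fun C₁ C₂ hC G hG => ?_⟩
  exact strictMonoOn_of_hasDerivAt_pos (convex_Ioo 0 3) isOpen_Ioo hG
    fun ρ hρ => div_pos (hkμQ ρ hρ) (hC ρ hρ)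

/-- Isentropic van der Waals filtration: if `exp(3σ₀/(4n)) > (1/(4ν))(1+ν)^{1+ν}(2-ν)^{2-ν}`
with `ν = 1 + 2/n`, `n > 2`, then `-6ρ² + 24Eν ρ^ν (3-ρ)^{-1-ν} > 0` on `(0,3)`; hence
`Q'(ρ) = (k/μ)(…) > 0` there, and any antiderivative `G` of `Q'(ρ)/(C₁(C₁ρ+C₂))` with
`C₁(C₁ρ+C₂) > 0` on `(0,3)` is strictly monotone (hence invertible). -/
theorem vdw_isentropic_invertibility
    (n σ₀ ν E : ℝ) (hn : 2 < n) (hν : ν = 1 + 2 / n)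
    (hE : E = Real.exp (3 * σ₀ / (4 * n)))
    (hσ : E > 1 / (4 * ν) * (1 + ν) ^ (1 + ν : ℝ) * (2 - ν) ^ (2 - ν : ℝ)) :
    (∀ ρ ∈ Set.Ioo (0 : ℝ) 3,
        0 < -6 * ρ ^ 2 + 24 * E * ν * ρ ^ (ν : ℝ) * (3 - ρ) ^ (-1 - ν : ℝ)) ∧
    (∀ k μ : ℝ, 0 < k → 0 < μ →
      (∀ ρ ∈ Set.Ioo (0 : ℝ) 3,
          0 < k / μ * (-6 * ρ ^ 2
                + 24 * E * ν * ρ ^ (ν : ℝ) * (3 - ρ) ^ (-1 - ν : ℝ))) ∧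
      (∀ C₁ C₂ : ℝ, (∀ ρ ∈ Set.Ioo (0 : ℝ) 3, 0 < C₁ * (C₁ * ρ + C₂)) →
        ∀ G : ℝ → ℝ,
          (∀ ρ ∈ Set.Ioo (0 : ℝ) 3,
            HasDerivAt G
              (k / μ * (-6 * ρ ^ 2
                  + 24 * E * ν * ρ ^ (ν : ℝ) * (3 - ρ) ^ (-1 - ν : ℝ))
                / (C₁ * (C₁ * ρ + C₂))) ρ) →
          StrictMonoOn G (Set.Ioo (0 : ℝ) 3))) :=
  vdw_isentropic_invertibility_general n ν E hn hν hσ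
end

section
/- Let α ∈ ℝ, q > 0, and let b₁ equal either −α + 1 or −α/2 + 1. On the half-plane {(y₀,y₁) ∈ ℝ² : y₀ > 0} define f(y₀,y₁) := b₁·y₁²/y₀, φ(y₀,y₁) := q(α + b₁)·y₀^{α−1}·y₁², and the vector field D acting on smooth functions g by (Dg)(y₀,y₁) = y₁·∂g/∂y₀ + f(y₀,y₁)·∂g/∂y₁. Then the Lie equation D(Dφ) = (∂f/∂y₀)·φ + (∂f/∂y₁)·(Dφ) holds identically on {y₀ > 0}; i.e., φ is a shuffle symmetry of the second-order ODE y'' = b₁(y')²/y, so this ODE is a second-order finite-dimensional dynamics for the evolutionary equation ρₜ = qρ^α ρₓₓ + qαρ^{α−1}(ρₓ)². -/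
/-!
Both `φ` and `Dφ` are monomials `K y₀^β y₁^m`, and `D` maps such a monomial to
`K (β + m b₁) y₀^(β-1) y₁^(m+1)`. Hence both sides of the Lie equation are multiples of
`y₀^(α-3) y₁⁴`, and their difference is `q (α + b₁)(b₁ + α - 1)(2b₁ + α - 2) y₀^(α-3) y₁⁴`,
which vanishes for the two admissible values of `b₁`.
-/

namespace SecondOrderODE

/-- The total derivative of `y'' = f(y, y')` in the jet coordinates `y₀ = y`, `y₁ = y'`. -/
noncomputable def totalDeriv (f g : ℝ → ℝ → ℝ) (y₀ y₁ : ℝ) : ℝ :=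
  y₁ * deriv (fun s => g s y₁) y₀ + f y₀ y₁ * deriv (fun s => g y₀ s) y₁

noncomputable def monomial (K β : ℝ) (m : ℕ) (y₀ y₁ : ℝ) : ℝ :=
  K * y₀ ^ β * y₁ ^ m

theorem totalDeriv_congr {f g h : ℝ → ℝ → ℝ} (hgh : ∀ y₀ > 0, ∀ y₁, g y₀ y₁ = h y₀ y₁)
    {y₀ : ℝ} (hy₀ : 0 < y₀) (y₁ : ℝ) : totalDeriv f g y₀ y₁ = totalDeriv f h y₀ y₁ := by
  have h_near : (fun s => g s y₁) =ᶠ[nhds y₀] fun s => h s y₁ :=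
    Filter.eventually_of_mem (Ioi_mem_nhds hy₀) fun s hs => hgh s hs y₁
  have h_slice : (fun s => g y₀ s) = fun s => h y₀ s := funext (hgh y₀ hy₀)
  rw [totalDeriv, totalDeriv, h_near.deriv_eq, h_slice]

theorem deriv_monomial_fst (K β : ℝ) (m : ℕ) {y₀ : ℝ} (hy₀ : y₀ ≠ 0) (y₁ : ℝ) :
    deriv (fun s => monomial K β m s y₁) y₀ = K * (β * y₀ ^ (β - 1)) * y₁ ^ m :=
  (((Real.hasDerivAt_rpow_const (Or.inl hy₀)).const_mul K).mul_const _).deriv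

theorem deriv_monomial_snd (K β : ℝ) (m : ℕ) (y₀ y₁ : ℝ) :
    deriv (fun s => monomial K β m y₀ s) y₁ = K * y₀ ^ β * (m * y₁ ^ (m - 1)) :=
  ((hasDerivAt_pow m y₁).const_mul _).deriv

theorem totalDeriv_monomial (b K β : ℝ) (m : ℕ) {y₀ : ℝ} (hy₀ : y₀ ≠ 0) (y₁ : ℝ) :
    totalDeriv (fun y₀ y₁ => b * y₁ ^ 2 / y₀) (monomial K β m) y₀ y₁
      = monomial (K * (β + m * b)) (β - 1) (m + 1) y₀ y₁ := by
  have h_pow : y₀ ^ β = y₀ ^ (β - 1) * y₀ := by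
    rw [← Real.rpow_add_one hy₀, sub_add_cancel]
  rw [totalDeriv, deriv_monomial_fst K β m hy₀, deriv_monomial_snd, monomial, h_pow]
  rcases m with _ | m
  · simp only [Nat.cast_zero, pow_zero, zero_mul]
    ring
  · field_simp
    simp only [Nat.add_sub_cancel]
    push_cast
    ring

theorem deriv_sq_div_fst (b : ℝ) {y₀ : ℝ} (hy₀ : y₀ ≠ 0) (y₁ : ℝ) :
    deriv (fun s => b * y₁ ^ 2 / s) y₀ = -(b * y₁ ^ 2 / y₀ ^ 2) := by
  simpa only [div_eq_mul_inv, mul_neg] using ((hasDerivAt_inv hy₀).const_mul (b * y₁ ^ 2)).deriv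

theorem deriv_sq_div_snd (b y₀ y₁ : ℝ) :
    deriv (fun s => b * s ^ 2 / y₀) y₁ = 2 * b * y₁ / y₀ := by
  rw [(((hasDerivAt_pow 2 y₁).const_mul b).div_const y₀).deriv]
  ring

theorem lie_coefficient_eq_zero {α b₁ : ℝ} (hb : b₁ = -α + 1 ∨ b₁ = -α / 2 + 1) :
    (b₁ + α - 1) * (2 * b₁ + α - 2) = 0 := by
  rcases hb with rfl | rfl <;> ring

end SecondOrderODE

open SecondOrderODE in
theorem second_order_dynamics_shuffle_symmetry_general
    (α q b₁ : ℝ) (hb : b₁ = -α + 1 ∨ b₁ = -α / 2 + 1)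
    (f φ : ℝ → ℝ → ℝ)
    (hf : ∀ y₀ y₁ : ℝ, f y₀ y₁ = b₁ * y₁ ^ 2 / y₀)
    (hφ : ∀ y₀ y₁ : ℝ, φ y₀ y₁ = q * (α + b₁) * y₀ ^ (α - 1 : ℝ) * y₁ ^ 2)
    (D : (ℝ → ℝ → ℝ) → ℝ → ℝ → ℝ)
    (hD : ∀ g : ℝ → ℝ → ℝ, ∀ y₀ y₁ : ℝ,
      D g y₀ y₁ = y₁ * deriv (fun s => g s y₁) y₀
        + f y₀ y₁ * deriv (fun s => g y₀ s) y₁) :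
    ∀ y₀ y₁ : ℝ, 0 < y₀ →
      D (D φ) y₀ y₁
        = deriv (fun s => f s y₁) y₀ * φ y₀ y₁
          + deriv (fun s => f y₀ s) y₁ * D φ y₀ y₁ := by
  intro y₀ y₁ hy₀
  obtain rfl : D = totalDeriv f := funext fun g => funext₂ (hD g)
  obtain rfl : f = fun y₀ y₁ => b₁ * y₁ ^ 2 / y₀ := funext₂ hf
  obtain rfl : φ = monomial (q * (α + b₁)) (α - 1) 2 := funext₂ hφ
  have hDφ : ∀ y₀ > 0, ∀ y₁,
      totalDeriv (fun y₀ y₁ => b₁ * y₁ ^ 2 / y₀) (monomial (q * (α + b₁)) (α - 1) 2) y₀ y₁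
        = monomial (q * (α + b₁) * (α - 1 + 2 * b₁)) (α - 2) 3 y₀ y₁ := fun y₀ hy₀ y₁ => by
    rw [totalDeriv_monomial _ _ _ _ hy₀.ne']
    norm_num [sub_sub]
  rw [totalDeriv_congr hDφ hy₀, totalDeriv_monomial _ _ _ _ hy₀.ne', hDφ y₀ hy₀,
    deriv_sq_div_fst _ hy₀.ne', deriv_sq_div_snd]
  have hpow_φ : y₀ ^ (α - 1) = y₀ ^ (α - 2 - 1) * y₀ ^ 2 := by
    rw [← Real.rpow_natCast, ← Real.rpow_add hy₀]; ring_nf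
  have hpow_Dφ : y₀ ^ (α - 2) = y₀ ^ (α - 2 - 1) * y₀ := by
    rw [← Real.rpow_add_one hy₀.ne', sub_add_cancel]
  simp only [monomial, hpow_φ, hpow_Dφ]
  push_cast
  field_simp
  linear_combination (q * (α + b₁) * y₁ ^ 4) * lie_coefficient_eq_zero hb

/-- For `b₁ = -α+1` or `b₁ = -α/2+1`, the function `φ = q(α+b₁) y₀^{α-1} y₁²` satisfies
the Lie equation `D(Dφ) = f_{y₀} φ + f_{y₁} Dφ` for the second-order ODE
`y'' = f(y₀,y₁) = b₁ y₁²/y₀` with total derivative `D = y₁ ∂_{y₀} + f ∂_{y₁}`; i.e. `φ`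
is a shuffle symmetry, so the ODE is a second-order finite-dimensional dynamics for
`ρₜ = qρ^α ρₓₓ + qαρ^{α-1}(ρₓ)²`. -/
theorem second_order_dynamics_shuffle_symmetry
    (α q b₁ : ℝ) (hq : 0 < q) (hb : b₁ = -α + 1 ∨ b₁ = -α / 2 + 1)
    (f φ : ℝ → ℝ → ℝ)
    (hf : ∀ y₀ y₁ : ℝ, f y₀ y₁ = b₁ * y₁ ^ 2 / y₀)
    (hφ : ∀ y₀ y₁ : ℝ, φ y₀ y₁ = q * (α + b₁) * y₀ ^ (α - 1 : ℝ) * y₁ ^ 2)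
    (D : (ℝ → ℝ → ℝ) → ℝ → ℝ → ℝ)
    (hD : ∀ g : ℝ → ℝ → ℝ, ∀ y₀ y₁ : ℝ,
      D g y₀ y₁ = y₁ * deriv (fun s => g s y₁) y₀
        + f y₀ y₁ * deriv (fun s => g y₀ s) y₁) :
    ∀ y₀ y₁ : ℝ, 0 < y₀ →
      D (D φ) y₀ y₁
        = deriv (fun s => f s y₁) y₀ * φ y₀ y₁
          + deriv (fun s => f y₀ s) y₁ * D φ y₀ y₁ :=
  second_order_dynamics_shuffle_symmetry_general α q b₁ hb f φ hf hφ D hD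
end

section
/- Let α ∈ ℝ with α ≠ 0 and α ≠ −2, q > 0, and let y : I → ℝ be a twice differentiable function on an open interval I with y(x) > 0 and y'(x) ≠ 0 for all x ∈ I, satisfying y'' = (1 − α/2)·(y')²/y on I. Then the two functions x ↦ −x + 2y(x)/(α·y'(x)) and x ↦ 2·y(x)^{2−α}/(q·α·(α+2)·y'(x)²) are constant on I. -/
/-!
With `k = 1 - α/2` the equation reads `y'' = k y'²/y`. Along a solution the quotient `y/y'` has
derivative `(y'² - y y'')/y'² = 1 - k = α/2`, and `y^{2k}/y'²` has derivative
`y^{2k-1}(2k y'² - 2 y y'')/y'³ = 0`. So `-x + (2/α)(y/y')` and every multiple of `y^{2-α}/y'²`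
have zero derivative on `I`, and a function with zero derivative on an interval is constant.
-/

theorem Set.OrdConnected.exists_eq_const_of_hasDerivAt_zero {E : Type*} [NormedAddCommGroup E]
    [NormedSpace ℝ E] {s : Set ℝ} (hs : s.OrdConnected) {f : ℝ → E}
    (hf : ∀ x ∈ s, HasDerivAt f 0 x) : ∃ c, ∀ x ∈ s, f x = c := by
  rcases s.eq_empty_or_nonempty with rfl | ⟨x₀, hx₀⟩
  · exact ⟨0, by simp⟩
  refine ⟨f x₀, fun x hx => ?_⟩
  have h := hs.convex.norm_image_sub_le_of_norm_hasDerivWithin_le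
    (fun z hz => (hf z hz).hasDerivWithinAt) (fun _ _ => norm_zero.le) hx₀ hx
  rwa [zero_mul, norm_le_zero_iff, sub_eq_zero] at h

section QuadraticOde

variable {y v : ℝ → ℝ} {k x : ℝ}

theorem hasDerivAt_div_of_ode (hy : HasDerivAt y (v x) x)
    (hv : HasDerivAt v (k * v x ^ 2 / y x) x) (hyx : y x ≠ 0) (hvx : v x ≠ 0) :
    HasDerivAt (fun t => y t / v t) (1 - k) x := by
  refine (hy.div hv hvx).congr_deriv ?_
  field_simp

theorem hasDerivAt_rpow_div_sq_of_ode (hy : HasDerivAt y (v x) x)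
    (hv : HasDerivAt v (k * v x ^ 2 / y x) x) (hyx : 0 < y x) (hvx : v x ≠ 0) :
    HasDerivAt (fun t => y t ^ (2 * k) / v t ^ 2) 0 x := by
  have hsplit : y x ^ (2 * k) = y x * y x ^ (2 * k - 1) := by
    conv_lhs => rw [show 2 * k = 1 + (2 * k - 1) by ring, Real.rpow_add hyx, Real.rpow_one]
  refine ((hy.rpow_const (Or.inl hyx.ne')).div (hv.fun_pow 2) (pow_ne_zero 2 hvx)).congr_deriv ?_
  rw [hsplit]
  field_simp
  ring

end QuadraticOde

theorem first_integrals_of_second_order_dynamics_general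
    (α q : ℝ) (hα0 : α ≠ 0)
    (I : Set ℝ) (hIconn : I.OrdConnected)
    (y : ℝ → ℝ)
    (hy1 : ∀ x ∈ I, DifferentiableAt ℝ y x)
    (hy2 : ∀ x ∈ I, DifferentiableAt ℝ (deriv y) x)
    (hpos : ∀ x ∈ I, 0 < y x)
    (hy' : ∀ x ∈ I, deriv y x ≠ 0)
    (hode : ∀ x ∈ I,
      deriv (deriv y) x = (1 - α / 2) * (deriv y x) ^ 2 / y x) :
    (∃ c₁ : ℝ, ∀ x ∈ I, -x + 2 * y x / (α * deriv y x) = c₁) ∧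
    (∃ c₂ : ℝ, ∀ x ∈ I,
      2 * y x ^ (2 - α : ℝ) / (q * α * (α + 2) * (deriv y x) ^ 2) = c₂) := by
  have hy (x) (hx : x ∈ I) : HasDerivAt y (deriv y x) x := (hy1 x hx).hasDerivAt
  have hv (x) (hx : x ∈ I) : HasDerivAt (deriv y) ((1 - α / 2) * deriv y x ^ 2 / y x) x :=
    hode x hx ▸ (hy2 x hx).hasDerivAt
  constructor
  · refine hIconn.exists_eq_const_of_hasDerivAt_zero fun x hx => ?_
    have h := (hasDerivAt_id' x).fun_neg.fun_add
      ((hasDerivAt_div_of_ode (hy x hx) (hv x hx) (hpos x hx).ne' (hy' x hx)).const_mul (2 / α))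
    convert h using 1
    · ext t
      ring
    · field_simp
      ring
  · obtain ⟨c, hc⟩ := hIconn.exists_eq_const_of_hasDerivAt_zero fun x hx =>
      hasDerivAt_rpow_div_sq_of_ode (hy x hx) (hv x hx) (hpos x hx) (hy' x hx)
    refine ⟨2 / (q * α * (α + 2)) * c, fun x hx => ?_⟩
    rw [← hc x hx, show 2 * (1 - α / 2) = 2 - α by ring, mul_div_mul_comm]

/-- For a positive twice differentiable solution of `y'' = (1-α/2)(y')²/y` with
nonvanishing derivative on an open interval, the two first integrals
`-x + 2y/(αy')` and `2y^{2-α}/(qα(α+2)(y')²)` are constant. -/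
theorem first_integrals_of_second_order_dynamics
    (α q : ℝ) (hα0 : α ≠ 0) (hα2 : α ≠ -2) (hq : 0 < q)
    (I : Set ℝ) (hIopen : IsOpen I) (hIconn : I.OrdConnected)
    (y : ℝ → ℝ)
    (hy1 : ∀ x ∈ I, DifferentiableAt ℝ y x)
    (hy2 : ∀ x ∈ I, DifferentiableAt ℝ (deriv y) x)
    (hpos : ∀ x ∈ I, 0 < y x)
    (hy' : ∀ x ∈ I, deriv y x ≠ 0)
    (hode : ∀ x ∈ I,
      deriv (deriv y) x = (1 - α / 2) * (deriv y x) ^ 2 / y x) :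
    (∃ c₁ : ℝ, ∀ x ∈ I, -x + 2 * y x / (α * deriv y x) = c₁) ∧
    (∃ c₂ : ℝ, ∀ x ∈ I,
      2 * y x ^ (2 - α : ℝ) / (q * α * (α + 2) * (deriv y x) ^ 2) = c₂) :=
  first_integrals_of_second_order_dynamics_general α q hα0 I hIconn y hy1 hy2 hpos hy' hode
end

section
/- Let α ∈ ℝ with α ≠ 0 and α ≠ −2, let q > 0 and let C₁, C₂ be constants with α/(2C₂q(α+2)) > 0. Then the function y(x) := (2C₂q(α+2)/(α(C₁+x)²))^{−1/α}, defined for x ≠ −C₁, satisfies y > 0 and the ODE y'' = (1 − α/2)·(y')²/y on each component of {x : x ≠ −C₁}. -/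
/-!
Since `2C₂q(α+2)/α = B > 0`, the function is `y = A ((C₁ + x)²)^{1/α}` with `A = B^{-1/α} > 0`.
For `f = A (u²)^p` with `u = C₁ + x` one has `f' = 2pA (u²)^p / u` and
`f'' = 2p(2p - 1)A (u²)^p / u²`, so `f'' f = (1 - 1/(2p)) f'²`; this is the ODE for `p = 1/α`.
-/

open Filter Topology

/-- The square keeps the base nonnegative: this is `A |c + x|^{2/α}` on both sides of `x = -c`. -/
noncomputable def powerSolution (A c α : ℝ) (x : ℝ) : ℝ :=
  A * ((c + x) ^ 2) ^ (1 / α)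

theorem Real.div_rpow_neg {b t : ℝ} (hb : 0 ≤ b) (ht : 0 ≤ t) (r : ℝ) :
    (b / t) ^ (-r) = b ^ (-r) * t ^ r := by
  rw [Real.div_rpow hb ht, Real.rpow_neg ht, div_inv_eq_mul]

theorem hasDerivAt_sq_rpow {c z : ℝ} (hz : c + z ≠ 0) (p : ℝ) :
    HasDerivAt (fun w => ((c + w) ^ 2) ^ p) (2 * p * ((c + z) ^ 2) ^ p / (c + z)) z := by
  have hsq : HasDerivAt (fun w => (c + w) ^ 2) (2 * (c + z)) z := by
    simpa using ((hasDerivAt_id z).const_add c).fun_pow 2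
  refine (hsq.rpow_const (p := p) (Or.inl (pow_ne_zero 2 hz))).congr_deriv ?_
  rw [Real.rpow_sub (by positivity), Real.rpow_one]
  field_simp

theorem hasDerivAt_sq_rpow_div {c z : ℝ} (hz : c + z ≠ 0) (p : ℝ) :
    HasDerivAt (fun w => ((c + w) ^ 2) ^ p / (c + w))
      ((2 * p - 1) * ((c + z) ^ 2) ^ p / (c + z) ^ 2) z := by
  refine ((hasDerivAt_sq_rpow hz p).fun_div ((hasDerivAt_id' z).const_add c) hz).congr_deriv ?_
  field_simp

theorem powerSolution_pos {A c α x : ℝ} (hA : 0 < A) (hx : c + x ≠ 0) :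
    0 < powerSolution A c α x :=
  mul_pos hA (Real.rpow_pos_of_pos (by positivity) _)

theorem hasDerivAt_powerSolution (A α : ℝ) {c z : ℝ} (hz : c + z ≠ 0) :
    HasDerivAt (powerSolution A c α)
      (2 * A / α * (((c + z) ^ 2) ^ (1 / α) / (c + z))) z := by
  refine ((hasDerivAt_sq_rpow hz (1 / α)).const_mul A).congr_deriv ?_
  ring

theorem deriv_deriv_powerSolution {A c α z : ℝ} (hA : A ≠ 0) (hα : α ≠ 0) (hz : c + z ≠ 0) :
    deriv (deriv (powerSolution A c α)) z =
      (1 - α / 2) * deriv (powerSolution A c α) z ^ 2 / powerSolution A c α z := by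
  have hderiv : deriv (powerSolution A c α) =ᶠ[𝓝 z]
      fun w => 2 * A / α * (((c + w) ^ 2) ^ (1 / α) / (c + w)) := by
    filter_upwards [(continuous_const.add continuous_id).isOpen_preimage _ isOpen_ne |>.mem_nhds hz]
      with w hw using (hasDerivAt_powerSolution A α hw).deriv
  rw [hderiv.deriv_eq, ((hasDerivAt_sq_rpow_div hz (1 / α)).const_mul _).deriv,
    (hasDerivAt_powerSolution A α hz).deriv, powerSolution]
  have hF : ((c + z) ^ 2) ^ (1 / α) ≠ 0 := (Real.rpow_pos_of_pos (by positivity) _).ne'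
  field_simp

theorem exact_solution_of_second_order_dynamics_general
    (α q C₁ C₂ : ℝ)
    (hsign : 0 < α / (2 * C₂ * q * (α + 2)))
    (y : ℝ → ℝ)
    (hy : ∀ x : ℝ,
      y x = (2 * C₂ * q * (α + 2) / (α * (C₁ + x) ^ 2)) ^ (-1 / α : ℝ)) :
    ∀ x : ℝ, x ≠ -C₁ →
      0 < y x ∧
      deriv (deriv y) x = (1 - α / 2) * (deriv y x) ^ 2 / y x := by
  set B := 2 * C₂ * q * (α + 2) / α
  have hB : 0 < B := by simpa [B, inv_div] using inv_pos.mpr hsign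
  have hα : α ≠ 0 := by rintro rfl; simp at hsign
  have hA : 0 < B ^ (-1 / α) := Real.rpow_pos_of_pos hB _
  have hy_eq : y = powerSolution (B ^ (-1 / α)) C₁ α := by
    funext x
    rw [hy, powerSolution, ← div_div, neg_div, Real.div_rpow_neg hB.le (by positivity)]
  intro x hx
  have hx : C₁ + x ≠ 0 := fun h => hx (by linarith)
  subst hy_eq
  exact ⟨powerSolution_pos hA hx, deriv_deriv_powerSolution hA.ne' hα hx⟩

/-- The function `y(x) = (2C₂q(α+2)/(α(C₁+x)²))^{-1/α}` is positive and satisfies the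
second-order dynamics `y'' = (1-α/2)(y')²/y` away from `x = -C₁`. -/
theorem exact_solution_of_second_order_dynamics
    (α q C₁ C₂ : ℝ) (hα0 : α ≠ 0) (hα2 : α ≠ -2) (hq : 0 < q)
    (hsign : 0 < α / (2 * C₂ * q * (α + 2)))
    (y : ℝ → ℝ)
    (hy : ∀ x : ℝ,
      y x = (2 * C₂ * q * (α + 2) / (α * (C₁ + x) ^ 2)) ^ (-1 / α : ℝ)) :
    ∀ x : ℝ, x ≠ -C₁ →
      0 < y x ∧
      deriv (deriv y) x = (1 - α / 2) * (deriv y x) ^ 2 / y x :=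
  exact_solution_of_second_order_dynamics_general α q C₁ C₂ hsign y hy
end

section
/- Let α ∈ ℝ with α ≠ 0 and α ≠ −2, q > 0, and C₁, C₂ ∈ ℝ. Define ρ(t,x) := (α(x+C₁)²/(2q(α+2)(C₂−t)))^{1/α} on the open set of (t,x) where x ≠ −C₁ and α/((α+2)(C₂−t)) > 0. Then ρ > 0 and ρ satisfies the filtration equation ρₜ = qρ^α ρₓₓ + qαρ^{α−1}(ρₓ)² on this set. -/
/-!
For fixed `t` the solution is `(k s²)^{1/α}` with `s = x + C₁` and
`k = α/(2q(α+2)(C₂-t)) > 0`; for fixed `x` it is `(m/(C₂-t))^{1/α}`. Both are powers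
`p = 1/α` of a positive base, so `ρₜ = pρ/(C₂-t)`, `ρₓ = 2pρ/s` and `ρₓₓ = 2p(2p-1)ρ/s²`.
Since `ρ^α = k s²` and `ρ^{α-1} = ρ^α/ρ`, the right-hand side is
`q k ρ · 2p(2p+1) = pρ/(C₂-t)`.
-/

open Filter Topology

section SquareProfile

variable {c C p y : ℝ}

theorem hasDerivAt_rpow_mul_sq (hc : 0 < c) (hy : y + C ≠ 0) :
    HasDerivAt (fun y => (c * (y + C) ^ 2) ^ p) (2 * p * (c * (y + C) ^ 2) ^ p / (y + C)) y := by
  have hpos : 0 < c * (y + C) ^ 2 := mul_pos hc (sq_pos_of_ne_zero hy)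
  have hbase : HasDerivAt (fun y => c * (y + C) ^ 2) (c * (2 * (y + C))) y := by
    simpa using (((hasDerivAt_id' y).add_const C).pow 2).const_mul c
  convert hbase.rpow_const (p := p) (Or.inl hpos.ne') using 1
  rw [Real.rpow_sub_one hpos.ne']
  field_simp

theorem deriv_rpow_mul_sq_eventuallyEq (hc : 0 < c) (hy : y + C ≠ 0) :
    deriv (fun y => (c * (y + C) ^ 2) ^ p)
      =ᶠ[𝓝 y] fun y => 2 * p * (c * (y + C) ^ 2) ^ p / (y + C) := by
  filter_upwards [(continuous_add_const C).continuousAt.eventually_ne hy] with z hz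
  exact (hasDerivAt_rpow_mul_sq hc hz).deriv

theorem hasDerivAt_deriv_rpow_mul_sq (hc : 0 < c) (hy : y + C ≠ 0) :
    HasDerivAt (deriv fun y => (c * (y + C) ^ 2) ^ p)
      (2 * p * (2 * p - 1) * (c * (y + C) ^ 2) ^ p / (y + C) ^ 2) y := by
  have hquot := ((hasDerivAt_rpow_mul_sq (p := p) hc hy).const_mul (2 * p)).div
    ((hasDerivAt_id' y).add_const C) hy
  refine (hquot.congr_of_eventuallyEq (deriv_rpow_mul_sq_eventuallyEq hc hy)).congr_deriv ?_
  field_simp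

end SquareProfile

theorem hasDerivAt_rpow_div_sub {m C t p : ℝ} (h : 0 < m / (C - t)) :
    HasDerivAt (fun t => (m / (C - t)) ^ p) (p * (m / (C - t)) ^ p / (C - t)) t := by
  obtain ⟨hm, hCt⟩ := div_ne_zero_iff.mp h.ne'
  have hbase : HasDerivAt (fun t => m / (C - t)) (m / (C - t) ^ 2) t := by
    have := (((hasDerivAt_id' t).const_sub C).fun_inv hCt).const_mul m
    simp only [← div_eq_mul_inv] at this
    exact this.congr_deriv (by ring)
  convert hbase.rpow_const (p := p) (Or.inl h.ne') using 1
  rw [Real.rpow_sub_one h.ne']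
  field_simp

theorem blow_up_solution_solves_filtration_general
    (α q C₁ C₂ : ℝ) (hq : 0 < q)
    (ρ : ℝ → ℝ → ℝ)
    (hρ : ∀ t x : ℝ,
      ρ t x = (α * (x + C₁) ^ 2 / (2 * q * (α + 2) * (C₂ - t))) ^ (1 / α : ℝ)) :
    ∀ t x : ℝ, x ≠ -C₁ → 0 < α / ((α + 2) * (C₂ - t)) →
      0 < ρ t x ∧
      deriv (fun t' => ρ t' x) t
        = q * ρ t x ^ (α : ℝ)
              * deriv (fun x' => deriv (fun x'' => ρ t x'') x') x
          + q * α * ρ t x ^ (α - 1 : ℝ)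
              * (deriv (fun x'' => ρ t x'') x) ^ 2 := by
  intro t x hx ht
  obtain ⟨hα, hατ⟩ := div_ne_zero_iff.mp ht.ne'
  obtain ⟨hα2, hτ⟩ := mul_ne_zero_iff.mp hατ
  have hs : x + C₁ ≠ 0 := fun h => hx (eq_neg_of_add_eq_zero_left h)
  set k := α / (2 * q * (α + 2) * (C₂ - t)) with hk_def
  set m := α * (x + C₁) ^ 2 / (2 * q * (α + 2)) with hm_def
  have hk : 0 < k := by
    rw [hk_def, show 2 * q * (α + 2) * (C₂ - t) = (α + 2) * (C₂ - t) * (2 * q) by ring,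
      ← div_div]
    positivity
  have hρx : (fun x' => ρ t x') = fun y => (k * (y + C₁) ^ 2) ^ (1 / α) := by
    funext y
    rw [hρ, div_mul_eq_mul_div]
  have hρt : (fun t' => ρ t' x) = fun t' => (m / (C₂ - t')) ^ (1 / α) := by
    funext t'
    rw [hρ, div_div]
  have hkm : k * (x + C₁) ^ 2 = m / (C₂ - t) := by
    rw [hk_def, hm_def, div_div, div_mul_eq_mul_div]
  have hbase : 0 < k * (x + C₁) ^ 2 := mul_pos hk (sq_pos_of_ne_zero hs)
  have hρk : ρ t x = (k * (x + C₁) ^ 2) ^ (1 / α) := congrFun hρx x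
  have hR : 0 < ρ t x := hρk ▸ Real.rpow_pos_of_pos hbase _
  have hpow : ρ t x ^ α = k * (x + C₁) ^ 2 := by
    rw [hρk, one_div, Real.rpow_inv_rpow hbase.le hα]
  refine ⟨hR, ?_⟩
  rw [hρt, (hasDerivAt_rpow_div_sub (hkm ▸ hbase)).deriv, ← hkm, ← hρk, hρx,
    (hasDerivAt_deriv_rpow_mul_sq hk hs).deriv, (hasDerivAt_rpow_mul_sq hk hs).deriv, ← hρk,
    Real.rpow_sub_one hR.ne', hpow, hk_def]
  field_simp
  ring

/-- The function `ρ(t,x) = (α(x+C₁)²/(2q(α+2)(C₂-t)))^{1/α}` is positive and satisfies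
the filtration equation `ρₜ = qρ^α ρₓₓ + qαρ^{α-1}(ρₓ)²` on the open set where
`x ≠ -C₁` and `α/((α+2)(C₂-t)) > 0`. -/
theorem blow_up_solution_solves_filtration
    (α q C₁ C₂ : ℝ) (hα0 : α ≠ 0) (hα2 : α ≠ -2) (hq : 0 < q)
    (ρ : ℝ → ℝ → ℝ)
    (hρ : ∀ t x : ℝ,
      ρ t x = (α * (x + C₁) ^ 2 / (2 * q * (α + 2) * (C₂ - t))) ^ (1 / α : ℝ)) :
    ∀ t x : ℝ, x ≠ -C₁ → 0 < α / ((α + 2) * (C₂ - t)) →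
      0 < ρ t x ∧
      deriv (fun t' => ρ t' x) t
        = q * ρ t x ^ (α : ℝ)
              * deriv (fun x' => deriv (fun x'' => ρ t x'') x') x
          + q * α * ρ t x ^ (α - 1 : ℝ)
              * (deriv (fun x'' => ρ t x'') x) ^ 2 :=
  blow_up_solution_solves_filtration_general α q C₁ C₂ hq ρ hρ
end

section
/- Let α ≠ 0, q > 0 and C₁, C₂ ∈ ℝ. Define ρ(t,x) := (C₁²αqt + C₁αx + C₂α)^{1/α} on the open set of (t,x) where C₁²αqt + C₁αx + C₂α > 0. Then ρ > 0 and ρ satisfies the filtration equation ρₜ = qρ^α ρₓₓ + qαρ^{α−1}(ρₓ)² on this set; moreover ρ is a travelling wave, i.e. ρ(t,x) = h(x + C₁qt) with h(s) = (αC₁s + αC₂)^{1/α}. -/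
/-!
With `u = bt + ax + c` affine, every derivative of `ρ = u ^ (1/α)` is a multiple of a power of
`u`, and `ρ ^ α = u`; both sides of the filtration equation then reduce to multiples of
`u ^ (1/α - 1)`, which agree as soon as `α b = q a²`. For `a = C₁α`, `b = C₁²αq` this balance
holds identically, and `u` depends on `(t, x)` only through `x + C₁qt`.
-/

open Real Topology

lemma hasDerivAt_affine_rpow {a b p x : ℝ} (h : a * x + b ≠ 0) :
    HasDerivAt (fun y => (a * y + b) ^ p) (p * (a * x + b) ^ (p - 1) * a) x := by
  have hlin : HasDerivAt (fun y => a * y + b) a x := by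
    simpa using ((hasDerivAt_id x).const_mul a).add_const b
  exact (hasDerivAt_rpow_const (Or.inl h)).comp x hlin

lemma deriv_deriv_affine_rpow {a b p x : ℝ} (h : a * x + b ≠ 0) :
    deriv (deriv fun y => (a * y + b) ^ p) x = p * (p - 1) * (a * x + b) ^ (p - 2) * a ^ 2 := by
  have hne : ∀ᶠ y in 𝓝 x, a * y + b ≠ 0 :=
    (isOpen_ne_fun (f := fun y => a * y + b) (by fun_prop) continuous_const).mem_nhds h
  have hderiv : deriv (fun y => (a * y + b) ^ p) =ᶠ[𝓝 x] fun y => p * (a * y + b) ^ (p - 1) * a := by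
    filter_upwards [hne] with y hy
    exact (hasDerivAt_affine_rpow hy).deriv
  rw [hderiv.deriv_eq, (((hasDerivAt_affine_rpow h).const_mul p).mul_const a).deriv,
    sub_sub, one_add_one_eq_two]
  ring

theorem filtration_eq_of_affine_rpow {α q a b c : ℝ} (hα : α ≠ 0) (hab : α * b = q * a ^ 2)
    {ρ : ℝ → ℝ → ℝ} (hρ : ∀ t x, ρ t x = (b * t + a * x + c) ^ (1 / α)) {t x : ℝ}
    (hu : 0 < b * t + a * x + c) :
    deriv (fun t' => ρ t' x) t
      = q * ρ t x ^ α * deriv (fun x' => deriv (fun x'' => ρ t x'') x') x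
        + q * α * ρ t x ^ (α - 1) * deriv (fun x'' => ρ t x'') x ^ 2 := by
  have hρt : (fun t' => ρ t' x) = fun t' => (b * t' + (a * x + c)) ^ (1 / α) :=
    funext fun t' => by rw [hρ]; ring_nf
  have hρx : (fun x' => ρ t x') = fun x' => (a * x' + (b * t + c)) ^ (1 / α) :=
    funext fun x' => by rw [hρ]; ring_nf
  have hut : b * t + (a * x + c) = b * t + a * x + c := by ring
  have hux : a * x + (b * t + c) = b * t + a * x + c := by ring
  rw [hρt, hρx, (hasDerivAt_affine_rpow (hut ▸ hu.ne')).deriv,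
    (hasDerivAt_affine_rpow (hux ▸ hu.ne')).deriv, deriv_deriv_affine_rpow (hux ▸ hu.ne'),
    hρ, hut, hux]
  generalize b * t + a * x + c = u at hu ⊢
  have hρα : (u ^ (1 / α)) ^ α = u := by
    rw [← rpow_mul hu.le, one_div_mul_cancel hα, rpow_one]
  rw [rpow_sub (rpow_pos_of_pos hu _), hρα, rpow_sub hu, rpow_sub hu, rpow_one, rpow_two,
    rpow_one]
  field_simp
  linear_combination hab

theorem travelling_wave_solution_general
    (α q C₁ C₂ : ℝ) (hα : α ≠ 0)
    (ρ : ℝ → ℝ → ℝ) (h : ℝ → ℝ)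
    (hρ : ∀ t x : ℝ,
      ρ t x = (C₁ ^ 2 * α * q * t + C₁ * α * x + C₂ * α) ^ (1 / α : ℝ))
    (hh : ∀ s : ℝ, h s = (α * C₁ * s + α * C₂) ^ (1 / α : ℝ)) :
    ∀ t x : ℝ, 0 < C₁ ^ 2 * α * q * t + C₁ * α * x + C₂ * α →
      0 < ρ t x ∧
      deriv (fun t' => ρ t' x) t
        = q * ρ t x ^ (α : ℝ)
              * deriv (fun x' => deriv (fun x'' => ρ t x'') x') x
          + q * α * ρ t x ^ (α - 1 : ℝ)
              * (deriv (fun x'' => ρ t x'') x) ^ 2 ∧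
      ρ t x = h (x + C₁ * q * t) := by
  intro t x hu
  refine ⟨hρ t x ▸ rpow_pos_of_pos hu _, filtration_eq_of_affine_rpow hα (by ring) hρ hu, ?_⟩
  rw [hρ, hh]
  ring_nf

/-- The function `ρ(t,x) = (C₁²αqt + C₁αx + C₂α)^{1/α}` is positive where its argument
is positive, satisfies the filtration equation `ρₜ = qρ^α ρₓₓ + qαρ^{α-1}(ρₓ)²` there,
and is a travelling wave: `ρ(t,x) = h(x + C₁qt)` with `h(s) = (αC₁s + αC₂)^{1/α}`. -/
theorem travelling_wave_solution
    (α q C₁ C₂ : ℝ) (hα : α ≠ 0) (hq : 0 < q)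
    (ρ : ℝ → ℝ → ℝ) (h : ℝ → ℝ)
    (hρ : ∀ t x : ℝ,
      ρ t x = (C₁ ^ 2 * α * q * t + C₁ * α * x + C₂ * α) ^ (1 / α : ℝ))
    (hh : ∀ s : ℝ, h s = (α * C₁ * s + α * C₂) ^ (1 / α : ℝ)) :
    ∀ t x : ℝ, 0 < C₁ ^ 2 * α * q * t + C₁ * α * x + C₂ * α →
      0 < ρ t x ∧
      deriv (fun t' => ρ t' x) t
        = q * ρ t x ^ (α : ℝ)
              * deriv (fun x' => deriv (fun x'' => ρ t x'') x') x
          + q * α * ρ t x ^ (α - 1 : ℝ)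
              * (deriv (fun x'' => ρ t x'') x) ^ 2 ∧
      ρ t x = h (x + C₁ * q * t) :=
  travelling_wave_solution_general α q C₁ C₂ hα ρ h hρ hh
end
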